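/- Suppose the flow is a curvature-dependent binormal flow ∂γ/∂t = g(k) B for a smooth function g : ℝ → ℝ with antiderivative G, and suppose ∂M/∂t = iR M + ω T for a real-valued function R(s,t), where ω = ⟨∂M/∂t, T⟩. Then there exists a real-valued function A of t alone such that the Hasimoto wave function satisfies i ∂ψ/∂t + ∂²/∂s²((g(k)/k) ψ) + (g(k)k − G(k)) ψ = A(t) ψ. -/

import Mathlib

open scoped BigOperators RealInnerProductSpace
open Complex

noncomputable section

abbrev E3 : Type := EuclideanSpace ℝ (Fin 3)

/-- Partial derivative with respect to the first (arclength) variable. -/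
noncomputable def dS {V : Type} [NormedAddCommGroup V] [NormedSpace ℝ V]
    (F : ℝ → ℝ → V) : ℝ → ℝ → V := fun s t => deriv (fun x => F x t) s

/-- Partial derivative with respect to the second (time) variable. -/
noncomputable def dT {V : Type} [NormedAddCommGroup V] [NormedSpace ℝ V]
    (F : ℝ → ℝ → V) : ℝ → ℝ → V := fun s t => deriv (fun x => F s x) t

/-- Complexification of a real vector in `ℝ³`. -/
noncomputable def cvec (v : E3) : Fin 3 → ℂ := fun i => (v i : ℂ)

/-- Bilinear extension of the real inner product to `ℂ³`. -/
noncomputable def cip (u v : Fin 3 → ℂ) : ℂ := ∑ i, u i * v i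

/-- The phase `θ(s,t) = ∫₀^s τ(s',t) ds'`. -/
noncomputable def θf (τ : ℝ → ℝ → ℝ) : ℝ → ℝ → ℝ :=
  fun s t => ∫ x in (0:ℝ)..s, τ x t

/-- The Hasimoto wave function `ψ = k e^{iθ}`. -/
noncomputable def ψf (k τ : ℝ → ℝ → ℝ) : ℝ → ℝ → ℂ :=
  fun s t => (k s t : ℂ) * Complex.exp (Complex.I * (θf τ s t : ℂ))

/-- The complexified frame vector `M = (N + iB) e^{iθ}`. -/
noncomputable def Mf (N B : ℝ → ℝ → E3) (τ : ℝ → ℝ → ℝ) : ℝ → ℝ → (Fin 3 → ℂ) :=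
  fun s t => Complex.exp (Complex.I * (θf τ s t : ℂ)) •
    (cvec (N s t) + Complex.I • cvec (B s t))

/-- `ω = ⟨∂M/∂t, T⟩` (bilinear inner product). -/
noncomputable def ωf (T N B : ℝ → ℝ → E3) (τ : ℝ → ℝ → ℝ) : ℝ → ℝ → ℂ :=
  fun s t => cip (dT (Mf N B τ) s t) (cvec (T s t))

/-! ### Auxiliary lemmas -/

/-- The phase factor `e^{iθ}`. -/
noncomputable def ef (τ : ℝ → ℝ → ℝ) : ℝ → ℝ → ℂ :=
  fun s t => Complex.exp (Complex.I * (θf τ s t : ℂ))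

theorem ef_eq (τ : ℝ → ℝ → ℝ) (s t : ℝ) :
    Complex.exp (Complex.I * (θf τ s t : ℂ)) = ef τ s t := rfl

/-- The time derivative of the phase. -/
noncomputable def Θf (τ : ℝ → ℝ → ℝ) : ℝ → ℝ → ℝ :=
  fun s t => ∫ x in (0:ℝ)..s, dT τ x t

section helpers
variable {V : Type} [NormedAddCommGroup V] [NormedSpace ℝ V]

theorem cont_fst {F : ℝ → ℝ → V} (h : ContDiff ℝ (⊤ : ℕ∞) (Function.uncurry F)) (t : ℝ) :
    Continuous (fun x => F x t) :=
  h.continuous.comp (continuous_id.prodMk continuous_const)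

theorem cont_snd {F : ℝ → ℝ → V} (h : ContDiff ℝ (⊤ : ℕ∞) (Function.uncurry F)) (s : ℝ) :
    Continuous (fun x => F s x) :=
  h.continuous.comp (continuous_const.prodMk continuous_id)

theorem hasDerivAt_dS {F : ℝ → ℝ → V} (h : ContDiff ℝ (⊤ : ℕ∞) (Function.uncurry F)) (s t : ℝ) :
    HasDerivAt (fun x => F x t) (dS F s t) s := by
  have hd : DifferentiableAt ℝ (fun x => F x t) s :=
    ((h.differentiable (by simp)).comp (differentiable_id.prodMk (differentiable_const t))) s
  exact hd.hasDerivAt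

theorem hasDerivAt_dT {F : ℝ → ℝ → V} (h : ContDiff ℝ (⊤ : ℕ∞) (Function.uncurry F)) (s t : ℝ) :
    HasDerivAt (fun x => F s x) (dT F s t) t := by
  have hd : DifferentiableAt ℝ (fun x => F s x) t :=
    ((h.differentiable (by simp)).comp ((differentiable_const s).prodMk differentiable_id)) t
  exact hd.hasDerivAt

theorem dS_eq_fderiv {F : ℝ → ℝ → V} (h : ContDiff ℝ (⊤ : ℕ∞) (Function.uncurry F)) (s t : ℝ) :
    dS F s t = fderiv ℝ (Function.uncurry F) (s, t) (1, 0) := by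
  have hf : HasFDerivAt (Function.uncurry F) (fderiv ℝ (Function.uncurry F) (s, t)) (s, t) :=
    ((h.differentiable (by simp)) (s, t)).hasFDerivAt
  have hg : HasDerivAt (fun x : ℝ => ((x, t) : ℝ × ℝ)) (1, 0) s :=
    (hasDerivAt_id s).prodMk (hasDerivAt_const s t)
  exact (hf.comp_hasDerivAt s hg).deriv

theorem dT_eq_fderiv {F : ℝ → ℝ → V} (h : ContDiff ℝ (⊤ : ℕ∞) (Function.uncurry F)) (s t : ℝ) :
    dT F s t = fderiv ℝ (Function.uncurry F) (s, t) (0, 1) := by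
  have hf : HasFDerivAt (Function.uncurry F) (fderiv ℝ (Function.uncurry F) (s, t)) (s, t) :=
    ((h.differentiable (by simp)) (s, t)).hasFDerivAt
  have hg : HasDerivAt (fun x : ℝ => ((s, x) : ℝ × ℝ)) (0, 1) t :=
    (hasDerivAt_const t s).prodMk (hasDerivAt_id t)
  exact (hf.comp_hasDerivAt t hg).deriv

theorem contDiff_dS {F : ℝ → ℝ → V} (h : ContDiff ℝ (⊤ : ℕ∞) (Function.uncurry F)) :
    ContDiff ℝ (⊤ : ℕ∞) (Function.uncurry (dS F)) := by
  have he : Function.uncurry (dS F) =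
      fun p : ℝ × ℝ => fderiv ℝ (Function.uncurry F) p (1, 0) := by
    funext p
    exact dS_eq_fderiv h p.1 p.2
  rw [he]
  exact (h.fderiv_right (by simp)).clm_apply contDiff_const

theorem contDiff_dT {F : ℝ → ℝ → V} (h : ContDiff ℝ (⊤ : ℕ∞) (Function.uncurry F)) :
    ContDiff ℝ (⊤ : ℕ∞) (Function.uncurry (dT F)) := by
  have he : Function.uncurry (dT F) =
      fun p : ℝ × ℝ => fderiv ℝ (Function.uncurry F) p (0, 1) := by
    funext p
    exact dT_eq_fderiv h p.1 p.2
  rw [he]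
  exact (h.fderiv_right (by simp)).clm_apply contDiff_const

theorem ftc_deriv {f : ℝ → ℝ} (hf : Continuous f) (s : ℝ) :
    HasDerivAt (fun x => ∫ y in (0:ℝ)..x, f y) (f s) s :=
  intervalIntegral.integral_hasDerivAt_right (hf.intervalIntegrable 0 s)
    hf.aestronglyMeasurable.stronglyMeasurableAtFilter hf.continuousAt

theorem hasDerivAt_theta_s {τ : ℝ → ℝ → ℝ} (h : ContDiff ℝ (⊤ : ℕ∞) (Function.uncurry τ)) (s t : ℝ) :
    HasDerivAt (fun x => θf τ x t) (τ s t) s :=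
  ftc_deriv (cont_fst h t) s

theorem hasDerivAt_theta_t {τ : ℝ → ℝ → ℝ} (h : ContDiff ℝ (⊤ : ℕ∞) (Function.uncurry τ)) (s t : ℝ) :
    HasDerivAt (fun u => θf τ s u) (Θf τ s t) t := by
  have hcont : Continuous (Function.uncurry (dT τ)) := (contDiff_dT h).continuous
  obtain ⟨C, hC⟩ : ∃ C, ∀ p ∈ (Set.uIcc (0:ℝ) s) ×ˢ Metric.closedBall t 1,
      ‖Function.uncurry (dT τ) p‖ ≤ C :=
    (isCompact_uIcc.prod (isCompact_closedBall t 1)).exists_bound_of_continuousOn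
      hcont.continuousOn
  have key := intervalIntegral.hasDerivAt_integral_of_dominated_loc_of_deriv_le
    (F := fun u x => τ x u) (F' := fun u x => dT τ x u) (x₀ := t) (a := (0:ℝ)) (b := s)
    (μ := MeasureTheory.volume) (bound := fun _ => C) (Metric.ball_mem_nhds t one_pos)
    (Filter.Eventually.of_forall fun u => ((cont_fst h u).aestronglyMeasurable))
    ((cont_fst h t).intervalIntegrable 0 s)
    ((cont_fst (contDiff_dT h) t).aestronglyMeasurable)
    (Filter.Eventually.of_forall fun x hx => fun u hu =>
      hC (x, u) ⟨Set.uIoc_subset_uIcc hx, Metric.ball_subset_closedBall hu⟩)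
    (intervalIntegrable_const)
    (Filter.Eventually.of_forall fun x _ => fun u _ => hasDerivAt_dT h x u)
  exact key.2

end helpers

theorem cvec_add (u v : E3) : cvec (u + v) = cvec u + cvec v := by
  funext i; simp [cvec]

theorem cvec_sub (u v : E3) : cvec (u - v) = cvec u - cvec v := by
  funext i; simp [cvec]

theorem cvec_smul (r : ℝ) (v : E3) : cvec (r • v) = (r : ℂ) • cvec v := by
  funext i; simp [cvec]

theorem cip_add_left (u v w : Fin 3 → ℂ) : cip (u + v) w = cip u w + cip v w := by
  simp [cip, add_mul, Finset.sum_add_distrib]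

theorem cip_add_right (u v w : Fin 3 → ℂ) : cip u (v + w) = cip u v + cip u w := by
  simp [cip, mul_add, Finset.sum_add_distrib]

theorem cip_sub_left (u v w : Fin 3 → ℂ) : cip (u - v) w = cip u w - cip v w := by
  simp [cip, sub_mul, Finset.sum_sub_distrib]

theorem cip_sub_right (u v w : Fin 3 → ℂ) : cip u (v - w) = cip u v - cip u w := by
  simp [cip, mul_sub, Finset.sum_sub_distrib]

theorem cip_smul_left (c : ℂ) (u w : Fin 3 → ℂ) : cip (c • u) w = c * cip u w := by
  simp [cip, Finset.mul_sum, mul_assoc]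

theorem cip_smul_right (c : ℂ) (u w : Fin 3 → ℂ) : cip u (c • w) = c * cip u w := by
  simp [cip, Finset.mul_sum]; ring_nf
  simp [mul_comm, mul_left_comm]

theorem cip_cvec (u v : E3) : cip (cvec u) (cvec v) = ((⟪u, v⟫ : ℝ) : ℂ) := by
  simp only [cip, cvec, PiLp.inner_apply, RCLike.inner_apply, conj_trivial]
  push_cast
  exact Finset.sum_congr rfl fun i _ => mul_comm _ _

theorem hasDerivAt_cvec {f : ℝ → E3} {f' : E3} {x : ℝ} (hf : HasDerivAt f f' x) :
    HasDerivAt (fun y => cvec (f y)) (cvec f') x := by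
  rw [hasDerivAt_pi]
  intro i
  have h1 : HasDerivAt (fun y => (EuclideanSpace.proj (𝕜 := ℝ) i) (f y)) (f' i) x := by
    exact (EuclideanSpace.proj (𝕜 := ℝ) i).hasFDerivAt.comp_hasDerivAt x hf
  have h2 := Complex.ofRealCLM.hasFDerivAt.comp_hasDerivAt x h1
  exact h2

theorem hasDerivAt_cip {u v : ℝ → (Fin 3 → ℂ)} {u' v' : Fin 3 → ℂ} {x : ℝ}
    (hu : HasDerivAt u u' x) (hv : HasDerivAt v v' x) :
    HasDerivAt (fun y => cip (u y) (v y)) (cip u' (v x) + cip (u x) v') x := by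
  have h : ∀ i ∈ Finset.univ (α := Fin 3), HasDerivAt (fun y => u y i * v y i)
      (u' i * v x i + u x i * v' i) x := fun i _ =>
    (hasDerivAt_pi.1 hu i).mul (hasDerivAt_pi.1 hv i)
  have := HasDerivAt.fun_sum h
  simpa [cip, Finset.sum_add_distrib] using this

theorem inner_const_dT {F G : ℝ → ℝ → E3} (hF : ContDiff ℝ (⊤ : ℕ∞) (Function.uncurry F))
    (hG : ContDiff ℝ (⊤ : ℕ∞) (Function.uncurry G)) {r : ℝ} (h : ∀ s t, ⟪F s t, G s t⟫ = r)
    (s t : ℝ) : ⟪F s t, dT G s t⟫ + ⟪dT F s t, G s t⟫ = 0 := by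
  have h1 := HasDerivAt.inner (𝕜 := ℝ) (hasDerivAt_dT hF s t) (hasDerivAt_dT hG s t)
  have h2 : (fun x => (⟪F s x, G s x⟫ : ℝ)) = fun _ => r := funext fun x => h s x
  rw [h2] at h1
  exact h1.unique (hasDerivAt_const t r)

theorem cip_expand (z w : ℂ) (u1 u2 v1 v2 : E3) :
    cip (z • (cvec u1 + Complex.I • cvec u2)) (w • (cvec v1 - Complex.I • cvec v2)) =
      z * w * ((((⟪u1, v1⟫ + ⟪u2, v2⟫ : ℝ)) : ℂ) +
        Complex.I * (((⟪u2, v1⟫ - ⟪u1, v2⟫ : ℝ)) : ℂ)) := by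
  simp only [cip_smul_left, cip_smul_right, cip_add_left, cip_sub_right, cip_cvec]
  push_cast
  linear_combination (-(w * z * ((⟪u2, v2⟫ : ℝ) : ℂ))) * Complex.I_sq

theorem cip_expand2 (w : ℂ) (u v1 v2 : E3) :
    cip (cvec u) (w • (cvec v1 - Complex.I • cvec v2)) =
      w * ((((⟪u, v1⟫ : ℝ)) : ℂ) - Complex.I * (((⟪u, v2⟫ : ℝ)) : ℂ)) := by
  simp only [cip_smul_right, cip_sub_right, cip_cvec]

theorem stmt9
    (γ T N B : ℝ → ℝ → E3) (k τ : ℝ → ℝ → ℝ)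
    (hγsm : ContDiff ℝ (⊤ : ℕ∞) (Function.uncurry γ))
    (hTsm : ContDiff ℝ (⊤ : ℕ∞) (Function.uncurry T))
    (hNsm : ContDiff ℝ (⊤ : ℕ∞) (Function.uncurry N))
    (hBsm : ContDiff ℝ (⊤ : ℕ∞) (Function.uncurry B))
    (hksm : ContDiff ℝ (⊤ : ℕ∞) (Function.uncurry k))
    (hτsm : ContDiff ℝ (⊤ : ℕ∞) (Function.uncurry τ))
    (hkpos : ∀ s t, 0 < k s t)
    (hTdef : ∀ s t, dS γ s t = T s t)
    (horth : ∀ s t, ⟪T s t, T s t⟫ = 1 ∧ ⟪N s t, N s t⟫ = 1 ∧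
      ⟪B s t, B s t⟫ = 1 ∧ ⟪T s t, N s t⟫ = 0 ∧
      ⟪T s t, B s t⟫ = 0 ∧ ⟪N s t, B s t⟫ = 0)
    (hFS1 : ∀ s t, dS T s t = k s t • N s t)
    (hFS2 : ∀ s t, dS N s t = -(k s t) • T s t + τ s t • B s t)
    (hFS3 : ∀ s t, dS B s t = -(τ s t) • N s t)
    (ν μ α : ℝ → ℝ → ℝ)
    (hνsm : ContDiff ℝ (⊤ : ℕ∞) (Function.uncurry ν))
    (hμsm : ContDiff ℝ (⊤ : ℕ∞) (Function.uncurry μ))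
    (hαsm : ContDiff ℝ (⊤ : ℕ∞) (Function.uncurry α))
    (hkin : ∀ s t, dT γ s t = ν s t • T s t + μ s t • N s t + α s t • B s t)
    (hmixγ : ∀ s t, dS (dT γ) s t = dT (dS γ) s t)
    (hmixT : ∀ s t, dS (dT T) s t = dT (dS T) s t)
    (hmixN : ∀ s t, dS (dT N) s t = dT (dS N) s t)
    (hmixB : ∀ s t, dS (dT B) s t = dT (dS B) s t)
    (g G : ℝ → ℝ)
    (hg : ContDiff ℝ (⊤ : ℕ∞) g)
    (hG : ∀ x, HasDerivAt G (g x) x)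
    (hν0 : ∀ s t, ν s t = 0)
    (hμ0 : ∀ s t, μ s t = 0)
    (hαg : ∀ s t, α s t = g (k s t))
    (R : ℝ → ℝ → ℝ)
    (hMt : ∀ s t, dT (Mf N B τ) s t =
      (Complex.I * (R s t : ℂ)) • Mf N B τ s t + ωf T N B τ s t • cvec (T s t))
    :
    ∃ A : ℝ → ℝ, ∀ s t,
      Complex.I * dT (ψf k τ) s t +
        dS (dS (fun s' t' => ((g (k s' t') / k s' t' : ℝ) : ℂ) * ψf k τ s' t')) s t +
        ((g (k s t) * k s t - G (k s t) : ℝ) : ℂ) * ψf k τ s t =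
      ((A t : ℝ) : ℂ) * ψf k τ s t := by
  classical
  set a : ℝ → ℝ → ℝ := fun s t => g (k s t) with ha_def
  have ha_eq : ∀ s t, g (k s t) = a s t := fun _ _ => rfl
  have hasm : ContDiff ℝ (⊤ : ℕ∞) (Function.uncurry a) := hg.comp hksm
  -- orthonormality shortcuts
  have hTT : ∀ s t, (⟪T s t, T s t⟫ : ℝ) = 1 := fun s t => (horth s t).1
  have hNN : ∀ s t, (⟪N s t, N s t⟫ : ℝ) = 1 := fun s t => (horth s t).2.1
  have hBB : ∀ s t, (⟪B s t, B s t⟫ : ℝ) = 1 := fun s t => (horth s t).2.2.1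
  have hTN : ∀ s t, (⟪T s t, N s t⟫ : ℝ) = 0 := fun s t => (horth s t).2.2.2.1
  have hTB : ∀ s t, (⟪T s t, B s t⟫ : ℝ) = 0 := fun s t => (horth s t).2.2.2.2.1
  have hNB : ∀ s t, (⟪N s t, B s t⟫ : ℝ) = 0 := fun s t => (horth s t).2.2.2.2.2
  have hNT : ∀ s t, (⟪N s t, T s t⟫ : ℝ) = 0 := fun s t => by
    rw [real_inner_comm]; exact hTN s t
  have hBT : ∀ s t, (⟪B s t, T s t⟫ : ℝ) = 0 := fun s t => by
    rw [real_inner_comm]; exact hTB s t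
  have hBN : ∀ s t, (⟪B s t, N s t⟫ : ℝ) = 0 := fun s t => by
    rw [real_inner_comm]; exact hNB s t
  -- derivatives of the phase factor
  have h_e_s : ∀ s t, HasDerivAt (fun x => ef τ x t)
      (Complex.I * (τ s t : ℂ) * ef τ s t) s := by
    intro s t
    have h1 : HasDerivAt (fun x => ((θf τ x t : ℝ) : ℂ)) ((τ s t : ℂ)) s :=
      (hasDerivAt_theta_s hτsm s t).ofReal_comp
    have h2 := (h1.const_mul Complex.I).cexp
    have h3 : HasDerivAt (fun x => ef τ x t)
        (Complex.exp (Complex.I * (θf τ s t : ℂ)) * (Complex.I * (τ s t : ℂ))) s := h2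
    rw [ef_eq] at h3
    convert h3 using 1
    ring
  have h_e_t : ∀ s t, HasDerivAt (fun x => ef τ s x)
      (Complex.I * (Θf τ s t : ℂ) * ef τ s t) t := by
    intro s t
    have h1 : HasDerivAt (fun x => ((θf τ s x : ℝ) : ℂ)) ((Θf τ s t : ℂ)) t :=
      (hasDerivAt_theta_t hτsm s t).ofReal_comp
    have h2 := (h1.const_mul Complex.I).cexp
    have h3 : HasDerivAt (fun x => ef τ s x)
        (Complex.exp (Complex.I * (θf τ s t : ℂ)) * (Complex.I * (Θf τ s t : ℂ))) t := h2
    rw [ef_eq] at h3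
    convert h3 using 1
    ring
  -- time derivative of M
  have hMder : ∀ s t, HasDerivAt (fun x => Mf N B τ s x)
      (ef τ s t • (cvec (dT N s t) + Complex.I • cvec (dT B s t)) +
        (Complex.I * (Θf τ s t : ℂ) * ef τ s t) •
          (cvec (N s t) + Complex.I • cvec (B s t))) t := by
    intro s t
    have hv : HasDerivAt (fun x => cvec (N s x) + Complex.I • cvec (B s x))
        (cvec (dT N s t) + Complex.I • cvec (dT B s t)) t :=
      (hasDerivAt_cvec (hasDerivAt_dT hNsm s t)).add
        ((hasDerivAt_cvec (hasDerivAt_dT hBsm s t)).const_smul Complex.I)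
    exact (h_e_t s t).smul hv
  have hdTM : ∀ s t, dT (Mf N B τ) s t =
      ef τ s t • (cvec (dT N s t) + Complex.I • cvec (dT B s t)) +
        (Complex.I * (Θf τ s t : ℂ) * ef τ s t) •
          (cvec (N s t) + Complex.I • cvec (B s t)) := by
    intro s t
    simpa only [dT] using (hMder s t).deriv
  have hMt' : ∀ s t,
      ef τ s t • (cvec (dT N s t) + Complex.I • cvec (dT B s t)) +
        (Complex.I * (Θf τ s t : ℂ) * ef τ s t) •
          (cvec (N s t) + Complex.I • cvec (B s t)) =
      (Complex.I * (R s t : ℂ)) • Mf N B τ s t + ωf T N B τ s t • cvec (T s t) := by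
    intro s t
    rw [← hdTM s t]; exact hMt s t
  -- pairing of M with a complexified real vector
  have hcipM : ∀ s t (v : E3), cip (Mf N B τ s t) (cvec v) =
      ef τ s t * (((⟪N s t, v⟫ : ℝ) : ℂ) + Complex.I * ((⟪B s t, v⟫ : ℝ) : ℂ)) := by
    intro s t v
    rw [show Mf N B τ s t = ef τ s t • (cvec (N s t) + Complex.I • cvec (B s t)) from rfl,
      cip_smul_left, cip_add_left, cip_smul_left, cip_cvec, cip_cvec]
  -- time derivative of T
  have hγt : dT γ = fun s t => a s t • B s t := by
    funext s t
    rw [hkin s t, hν0, hμ0, hαg]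
    simp
    rfl
  have hTfun : T = dS γ := funext fun s => funext fun t => (hTdef s t).symm
  have hTt : ∀ s t, dT T s t = dS a s t • B s t - (a s t * τ s t) • N s t := by
    intro s t
    have h1 : dT T s t = dS (dT γ) s t := by rw [hTfun]; exact (hmixγ s t).symm
    have h2 : HasDerivAt (fun x => a x t • B x t)
        (a s t • dS B s t + dS a s t • B s t) s :=
      (hasDerivAt_dS hasm s t).smul (hasDerivAt_dS hBsm s t)
    have h3 : dS (dT γ) s t = a s t • dS B s t + dS a s t • B s t := by
      rw [hγt]
      simpa only [dS] using h2.deriv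
    rw [h1, h3, hFS3 s t]
    module
  -- derivative consequences of orthonormality
  have hNtN : ∀ s t, (⟪dT N s t, N s t⟫ : ℝ) = 0 := by
    intro s t
    have h1 := inner_const_dT hNsm hNsm hNN s t
    have hc : (⟪N s t, dT N s t⟫ : ℝ) = ⟪dT N s t, N s t⟫ := real_inner_comm _ _
    linarith
  have hBtB : ∀ s t, (⟪dT B s t, B s t⟫ : ℝ) = 0 := by
    intro s t
    have h1 := inner_const_dT hBsm hBsm hBB s t
    have hc : (⟪B s t, dT B s t⟫ : ℝ) = ⟪dT B s t, B s t⟫ := real_inner_comm _ _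
    linarith
  have hNtB : ∀ s t, (⟪N s t, dT B s t⟫ : ℝ) = -⟪dT N s t, B s t⟫ := by
    intro s t
    have h1 := inner_const_dT hNsm hBsm hNB s t
    linarith
  have hBtN : ∀ s t, (⟪dT B s t, N s t⟫ : ℝ) = -⟪dT N s t, B s t⟫ := by
    intro s t
    rw [real_inner_comm]
    exact hNtB s t
  -- formula for ω
  have hω : ∀ s t, ωf T N B τ s t =
      (((a s t * τ s t : ℝ) : ℂ) - Complex.I * ((dS a s t : ℝ) : ℂ)) * ef τ s t := by
    intro s t
    have hφ : HasDerivAt (fun x => cip (Mf N B τ s x) (cvec (T s x)))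
        (cip (ef τ s t • (cvec (dT N s t) + Complex.I • cvec (dT B s t)) +
            (Complex.I * (Θf τ s t : ℂ) * ef τ s t) •
              (cvec (N s t) + Complex.I • cvec (B s t))) (cvec (T s t)) +
          cip (Mf N B τ s t) (cvec (dT T s t))) t :=
      hasDerivAt_cip (hMder s t) (hasDerivAt_cvec (hasDerivAt_dT hTsm s t))
    have hzero : (fun x => cip (Mf N B τ s x) (cvec (T s x))) = fun _ => (0 : ℂ) := by
      funext x
      rw [hcipM s x (T s x), hNT, hBT]
      norm_num
    rw [hzero] at hφ
    have h0 := hφ.unique (hasDerivAt_const t (0:ℂ))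
    have h2 : ωf T N B τ s t =
        cip (ef τ s t • (cvec (dT N s t) + Complex.I • cvec (dT B s t)) +
            (Complex.I * (Θf τ s t : ℂ) * ef τ s t) •
              (cvec (N s t) + Complex.I • cvec (B s t))) (cvec (T s t)) := by
      rw [ωf, hdTM]
    rw [h2]
    have h1 : cip (ef τ s t • (cvec (dT N s t) + Complex.I • cvec (dT B s t)) +
          (Complex.I * (Θf τ s t : ℂ) * ef τ s t) •
            (cvec (N s t) + Complex.I • cvec (B s t))) (cvec (T s t)) =
        -cip (Mf N B τ s t) (cvec (dT T s t)) := by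
      linear_combination h0
    rw [h1, hcipM s t _, hTt s t]
    rw [inner_sub_right, inner_sub_right, real_inner_smul_right, real_inner_smul_right,
      real_inner_smul_right, real_inner_smul_right, hNB, hNN, hBB, hBN]
    push_cast
    ring
  -- ψ in terms of the phase factor, and as a pairing
  have hψe : ∀ s t, ψf k τ s t = ((k s t : ℝ) : ℂ) * ef τ s t := fun s t => rfl
  have hψcip : ∀ s t, ψf k τ s t = cip (Mf N B τ s t) (cvec (k s t • N s t)) := by
    intro s t
    rw [hcipM s t _, inner_smul_right, inner_smul_right, hNN, hBN, hψe]
    push_cast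
    ring
  -- mixed second derivative of T
  have hdST : dS T = fun s t => k s t • N s t := funext fun s => funext fun t => hFS1 s t
  have hW1 : ∀ s t, dT (dS T) s t = k s t • dT N s t + dT k s t • N s t := by
    intro s t
    rw [hdST]
    exact ((hasDerivAt_dT hksm s t).smul (hasDerivAt_dT hNsm s t)).deriv
  have hdTT : dT T = fun s t => dS a s t • B s t - (a s t * τ s t) • N s t :=
    funext fun s => funext fun t => hTt s t
  have hW2 : ∀ s t, dS (dT T) s t =
      (dS a s t • dS B s t + dS (dS a) s t • B s t) -
        ((a s t * τ s t) • dS N s t + (dS a s t * τ s t + a s t * dS τ s t) • N s t) := by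
    intro s t
    have h1 : HasDerivAt (fun x => dS a x t • B x t)
        (dS a s t • dS B s t + dS (dS a) s t • B s t) s :=
      (hasDerivAt_dS (contDiff_dS hasm) s t).smul (hasDerivAt_dS hBsm s t)
    have h2 : HasDerivAt (fun x => (a x t * τ x t) • N x t)
        ((a s t * τ s t) • dS N s t + (dS a s t * τ s t + a s t * dS τ s t) • N s t) s :=
      ((hasDerivAt_dS hasm s t).mul (hasDerivAt_dS hτsm s t)).smul (hasDerivAt_dS hNsm s t)
    rw [hdTT]
    exact (h1.sub h2).deriv
  have hW : ∀ s t, k s t • dT N s t + dT k s t • N s t =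
      (a s t * τ s t * k s t) • T s t +
        (-(2 * dS a s t * τ s t + a s t * dS τ s t)) • N s t +
        (dS (dS a) s t - a s t * τ s t ^ 2) • B s t := by
    intro s t
    rw [← hW1 s t, ← hmixT s t, hW2 s t, hFS2 s t, hFS3 s t]
    module
  -- formula for ψ_t
  have hψt : ∀ s t, dT (ψf k τ) s t =
      Complex.I * ((R s t : ℝ) : ℂ) * ψf k τ s t +
        ef τ s t * (((-(2 * dS a s t * τ s t + a s t * dS τ s t) : ℝ) : ℂ) +
          Complex.I * ((dS (dS a) s t - a s t * τ s t ^ 2 : ℝ) : ℂ)) := by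
    intro s t
    have hfun : (fun x => ψf k τ s x) =
        fun x => cip (Mf N B τ s x) (cvec (k s x • N s x)) :=
      funext fun x => hψcip s x
    have hD : HasDerivAt (fun x => cip (Mf N B τ s x) (cvec (k s x • N s x)))
        (cip (ef τ s t • (cvec (dT N s t) + Complex.I • cvec (dT B s t)) +
            (Complex.I * (Θf τ s t : ℂ) * ef τ s t) •
              (cvec (N s t) + Complex.I • cvec (B s t))) (cvec (k s t • N s t)) +
          cip (Mf N B τ s t) (cvec (k s t • dT N s t + dT k s t • N s t))) t :=
      hasDerivAt_cip (hMder s t)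
        (hasDerivAt_cvec ((hasDerivAt_dT hksm s t).smul (hasDerivAt_dT hNsm s t)))
    have hval : dT (ψf k τ) s t =
        cip (ef τ s t • (cvec (dT N s t) + Complex.I • cvec (dT B s t)) +
            (Complex.I * (Θf τ s t : ℂ) * ef τ s t) •
              (cvec (N s t) + Complex.I • cvec (B s t))) (cvec (k s t • N s t)) +
          cip (Mf N B τ s t) (cvec (k s t • dT N s t + dT k s t • N s t)) := by
      simp only [dT]
      rw [hfun]
      exact hD.deriv
    have hA : cip (ef τ s t • (cvec (dT N s t) + Complex.I • cvec (dT B s t)) +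
          (Complex.I * (Θf τ s t : ℂ) * ef τ s t) •
            (cvec (N s t) + Complex.I • cvec (B s t))) (cvec (k s t • N s t)) =
        Complex.I * ((R s t : ℝ) : ℂ) * ψf k τ s t := by
      rw [hMt' s t, cip_add_left, cip_smul_left, cip_smul_left, ← hψcip s t,
        cvec_smul, cip_smul_right, cip_cvec, hTN]
      push_cast
      ring
    have hB2 : cip (Mf N B τ s t) (cvec (k s t • dT N s t + dT k s t • N s t)) =
        ef τ s t * (((-(2 * dS a s t * τ s t + a s t * dS τ s t) : ℝ) : ℂ) +
          Complex.I * ((dS (dS a) s t - a s t * τ s t ^ 2 : ℝ) : ℂ)) := by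
      rw [hW s t, hcipM s t _]
      rw [inner_add_right, inner_add_right, inner_add_right, inner_add_right,
        real_inner_smul_right, real_inner_smul_right, real_inner_smul_right,
        real_inner_smul_right, real_inner_smul_right, real_inner_smul_right,
        hNT, hNN, hNB, hBT, hBN, hBB]
      push_cast
      ring
    rw [hval, hA, hB2]
  -- the second derivative term
  have hF2fun : (fun s' t' => ((g (k s' t') / k s' t' : ℝ) : ℂ) * ψf k τ s' t') =
      fun s t => ((a s t : ℝ) : ℂ) * ef τ s t := by
    funext s t
    rw [hψe s t]
    have hk0 : ((k s t : ℝ) : ℂ) ≠ 0 := by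
      exact_mod_cast ne_of_gt (hkpos s t)
    rw [← ha_eq]
    push_cast
    field_simp
  have hdSF2 : ∀ s t, dS (fun s t => ((a s t : ℝ) : ℂ) * ef τ s t) s t =
      (((dS a s t : ℝ) : ℂ) + Complex.I * ((a s t * τ s t : ℝ) : ℂ)) * ef τ s t := by
    intro s t
    have h1 : HasDerivAt (fun x => ((a x t : ℝ) : ℂ)) ((dS a s t : ℝ) : ℂ) s :=
      (hasDerivAt_dS hasm s t).ofReal_comp
    have h2 := (h1.mul (h_e_s s t)).deriv
    have e1 : dS (fun s t => ((a s t : ℝ) : ℂ) * ef τ s t) s t =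
        deriv (fun x => ((a x t : ℝ) : ℂ) * ef τ x t) s := rfl
    rw [e1, show deriv (fun x => ((a x t : ℝ) : ℂ) * ef τ x t) s = _ from h2]
    push_cast
    ring
  have hdSSF2 : ∀ s t, dS (dS (fun s t => ((a s t : ℝ) : ℂ) * ef τ s t)) s t =
      (((dS (dS a) s t - a s t * τ s t ^ 2 : ℝ) : ℂ) +
        Complex.I * ((2 * dS a s t * τ s t + a s t * dS τ s t : ℝ) : ℂ)) * ef τ s t := by
    intro s t
    have hfun : dS (fun s t => ((a s t : ℝ) : ℂ) * ef τ s t) =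
        fun s t => (((dS a s t : ℝ) : ℂ) + Complex.I * ((a s t * τ s t : ℝ) : ℂ)) *
          ef τ s t :=
      funext fun s => funext fun t => hdSF2 s t
    rw [hfun]
    have h1 : HasDerivAt
        (fun x => ((dS a x t : ℝ) : ℂ) + Complex.I * ((a x t * τ x t : ℝ) : ℂ))
        (((dS (dS a) s t : ℝ) : ℂ) +
          Complex.I * ((dS a s t * τ s t + a s t * dS τ s t : ℝ) : ℂ)) s :=
      ((hasDerivAt_dS (contDiff_dS hasm) s t).ofReal_comp).add
        ((((hasDerivAt_dS hasm s t).mul (hasDerivAt_dS hτsm s t)).ofReal_comp).const_mul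
          Complex.I)
    have h2 := (h1.mul (h_e_s s t)).deriv
    have e1 : dS (fun s t => (((dS a s t : ℝ) : ℂ) +
        Complex.I * ((a s t * τ s t : ℝ) : ℂ)) * ef τ s t) s t =
      deriv (fun x => (((dS a x t : ℝ) : ℂ) +
        Complex.I * ((a x t * τ x t : ℝ) : ℂ)) * ef τ x t) s := rfl
    rw [e1, show deriv (fun x => (((dS a x t : ℝ) : ℂ) +
        Complex.I * ((a x t * τ x t : ℝ) : ℂ)) * ef τ x t) s = _ from h2]
    push_cast
    linear_combination (((a s t : ℝ) : ℂ) * ((τ s t : ℝ) : ℂ) ^ 2 * ef τ s t) * Complex.I_sq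
  -- the component c = ⟪N_t, B⟫ and the identity R = Θ - c
  set c : ℝ → ℝ → ℝ := fun s t => ⟪dT N s t, B s t⟫ with hc_def
  have hc_eq : ∀ s t, (⟪dT N s t, B s t⟫ : ℝ) = c s t := fun _ _ => rfl
  have hRΘc : ∀ s t, R s t = Θf τ s t - c s t := by
    intro s t
    set w : ℂ := Complex.exp (-(Complex.I * (θf τ s t : ℂ))) with hw_def
    have hEE : ef τ s t * w = 1 := by
      rw [hw_def, ef, ← Complex.exp_add]
      simp
    have hL : cip (ef τ s t • (cvec (dT N s t) + Complex.I • cvec (dT B s t)) +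
          (Complex.I * (Θf τ s t : ℂ) * ef τ s t) •
            (cvec (N s t) + Complex.I • cvec (B s t)))
          (w • (cvec (N s t) - Complex.I • cvec (B s t))) =
        2 * Complex.I * ((Θf τ s t : ℝ) : ℂ) - 2 * Complex.I * ((c s t : ℝ) : ℂ) := by
      rw [cip_add_left, cip_expand, cip_expand]
      rw [hNtN, hBtB, hNN, hBB, hBN, hNB, hBtN, hc_eq]
      push_cast
      linear_combination ((-2 : ℂ) * Complex.I * ((c s t : ℝ) : ℂ) +
        2 * Complex.I * ((Θf τ s t : ℝ) : ℂ)) * hEE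
    have hR2 : cip (ef τ s t • (cvec (dT N s t) + Complex.I • cvec (dT B s t)) +
          (Complex.I * (Θf τ s t : ℝ) * ef τ s t) •
            (cvec (N s t) + Complex.I • cvec (B s t)))
          (w • (cvec (N s t) - Complex.I • cvec (B s t))) =
        2 * Complex.I * ((R s t : ℝ) : ℂ) := by
      rw [hMt' s t, cip_add_left, cip_smul_left, cip_smul_left]
      have hMMb : cip (Mf N B τ s t) (w • (cvec (N s t) - Complex.I • cvec (B s t))) =
          (2 : ℂ) := by
        rw [show Mf N B τ s t = ef τ s t • (cvec (N s t) + Complex.I • cvec (B s t))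
          from rfl, cip_expand]
        rw [hNN, hBB, hBN, hNB]
        push_cast
        linear_combination (2 : ℂ) * hEE
      have hTMb : cip (cvec (T s t)) (w • (cvec (N s t) - Complex.I • cvec (B s t))) =
          0 := by
        rw [cip_expand2, hTN, hTB]
        simp
      rw [hMMb, hTMb]
      ring
    have hEq := hL.symm.trans hR2
    have h3 : ((R s t : ℝ) : ℂ) = ((Θf τ s t : ℝ) : ℂ) - ((c s t : ℝ) : ℂ) := by
      linear_combination (Complex.I / 2) * hEq -
        (((Θf τ s t : ℝ) : ℂ) - ((c s t : ℝ) : ℂ) - ((R s t : ℝ) : ℂ)) * Complex.I_sq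
    exact_mod_cast h3
  -- the s-derivative of c
  have hcs : ∀ s t, HasDerivAt (fun x => c x t) (dT τ s t - k s t * dS a s t) s := by
    intro s t
    have h1 : HasDerivAt (fun x => (⟪dT N x t, B x t⟫ : ℝ))
        ((⟪dT N s t, dS B s t⟫ : ℝ) + ⟪dS (dT N) s t, B s t⟫) s :=
      HasDerivAt.inner (𝕜 := ℝ) (hasDerivAt_dS (contDiff_dT hNsm) s t)
        (hasDerivAt_dS hBsm s t)
    have hdSN : dS N = fun s t => -(k s t) • T s t + τ s t • B s t :=
      funext fun s => funext fun t => hFS2 s t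
    have h3 : dT (dS N) s t =
        ((-(k s t)) • dT T s t + (-(dT k s t)) • T s t) +
          (τ s t • dT B s t + dT τ s t • B s t) := by
      rw [hdSN]
      exact
        (((hasDerivAt_dT hksm s t).neg.smul (hasDerivAt_dT hTsm s t)).add
          ((hasDerivAt_dT hτsm s t).smul (hasDerivAt_dT hBsm s t))).deriv
    have h4 : (⟪dS (dT N) s t, B s t⟫ : ℝ) = dT τ s t - k s t * dS a s t := by
      rw [hmixN s t, h3, hTt s t]
      simp only [inner_add_left, inner_sub_left, real_inner_smul_left]
      rw [hTB, hBtB, hBB, hNB]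
      ring
    have h5 : (⟪dT N s t, dS B s t⟫ : ℝ) = 0 := by
      rw [hFS3 s t, real_inner_smul_right, hNtN]
      ring
    rw [h4, h5] at h1
    simpa using h1
  -- the s-derivative of R, and constancy of R - (kg(k) - G(k)) in s
  have hRs : ∀ s t, HasDerivAt (fun x => R x t) (k s t * dS a s t) s := by
    intro s t
    have hfun : (fun x => R x t) = fun x => Θf τ x t - c x t :=
      funext fun x => hRΘc x t
    rw [hfun]
    have h1 : HasDerivAt (fun x => Θf τ x t) (dT τ s t) s :=
      ftc_deriv (cont_fst (contDiff_dT hτsm) t) s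
    have h2 : HasDerivAt (fun x => Θf τ x t - c x t)
        (dT τ s t - (dT τ s t - k s t * dS a s t)) s := h1.sub (hcs s t)
    convert h2 using 1
    ring
  have hGk : ∀ s t, HasDerivAt (fun x => k x t * a x t - G (k x t))
      (k s t * dS a s t) s := by
    intro s t
    have h1 : HasDerivAt (fun x => k x t * a x t)
        (dS k s t * a s t + k s t * dS a s t) s :=
      (hasDerivAt_dS hksm s t).mul (hasDerivAt_dS hasm s t)
    have h2 : HasDerivAt (fun x => G (k x t)) (g (k s t) * dS k s t) s :=
      (hG (k s t)).comp s (hasDerivAt_dS hksm s t)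
    have h3 : HasDerivAt (fun x => k x t * a x t - G (k x t))
        (dS k s t * a s t + k s t * dS a s t - g (k s t) * dS k s t) s := h1.sub h2
    convert h3 using 1
    rw [ha_eq]
    ring
  have hconst : ∀ s t, R s t - (k s t * a s t - G (k s t)) =
      R 0 t - (k 0 t * a 0 t - G (k 0 t)) := by
    intro s t
    have hd : ∀ x, HasDerivAt (fun x => R x t - (k x t * a x t - G (k x t))) 0 x := by
      intro x
      have : HasDerivAt (fun x => R x t - (k x t * a x t - G (k x t)))
          (k x t * dS a x t - k x t * dS a x t) x := (hRs x t).sub (hGk x t)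
      simpa using this
    have hdiff : Differentiable ℝ (fun x => R x t - (k x t * a x t - G (k x t))) :=
      fun x => (hd x).differentiableAt
    exact is_const_of_deriv_eq_zero hdiff (fun x => (hd x).deriv) s 0
  -- final assembly
  refine ⟨fun t => (k 0 t * g (k 0 t) - G (k 0 t)) - R 0 t, fun s t => ?_⟩
  rw [hψt s t, hF2fun, hdSSF2 s t, hψe s t]
  have hRR : ((R s t : ℝ) : ℂ) = ((k s t * a s t - G (k s t) : ℝ) : ℂ) +
      ((R 0 t : ℝ) : ℂ) - ((k 0 t * a 0 t - G (k 0 t) : ℝ) : ℂ) := by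
    have h1 := hconst s t
    have h2 : R s t = (k s t * a s t - G (k s t)) +
        R 0 t - (k 0 t * a 0 t - G (k 0 t)) := by linarith
    exact_mod_cast h2
  have hbeta : ((fun t => k 0 t * g (k 0 t) - G (k 0 t) - R 0 t) t : ℝ) =
      k 0 t * a 0 t - G (k 0 t) - R 0 t := rfl
  rw [hbeta, ha_eq s t]
  push_cast at hRR ⊢
  linear_combination (-(((k s t : ℝ) : ℂ) * ef τ s t)) * hRR +
    ((((R s t : ℝ) : ℂ) * ((k s t : ℝ) : ℂ) +
      (((dS (dS a) s t : ℝ) : ℂ) - ((a s t : ℝ) : ℂ) * ((τ s t : ℝ) : ℂ) ^ 2)) *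
        ef τ s t) * Complex.I_sq
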